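/- Let u ∈ V be a node of out-degree 0 in G (no edge of E starts at u), let G − u denote the subgraph of G induced on V ∖ {u}, and let T′ be a BFS-tree of G − u. Then the ordered spanning tree of G obtained from T′ by adding u as the leftmost child of r — that is, with parent r and placed first in the sibling order of the children of r — is a BFS-tree of G. -/

import Mathlib

namespace BFSFormal

variable {V : Type} [Fintype V] [DecidableEq V]

/-- An ordered rooted tree structure on `V ∪ {r}`, where the dummy root `r`
is represented by `none`.  `parent v = none` means the parent of `v` is `r`;
`children w` lists the children of `w` in sibling order. -/
structure PreTree (V : Type) where
  parent : V → Option V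
  children : Option V → List V

/-- One step of the parent function, with `r` (= `none`) absorbing. -/
def parentStep (T : PreTree V) : Option V → Option V
  | none => none
  | some v => T.parent v

/-- `T` is an ordered spanning tree of the directed graph on `V` with edge set `E`
(augmented with the dummy root `r`): iterating the parent function from any node
reaches `r`; every tree edge `(P v, v)` with `P v ≠ r` lies in `E`; and the
children lists give, without repetition, exactly the children of each node. -/
def IsOST (E : Finset (V × V)) (T : PreTree V) : Prop :=
  (∀ v : V, ∃ k : ℕ, (parentStep T)^[k] (some v) = none) ∧
  (∀ v u : V, T.parent v = some u → (u, v) ∈ E) ∧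
  (∀ w : Option V, (T.children w).Nodup) ∧
  (∀ (w : Option V) (v : V), v ∈ T.children w ↔ T.parent v = w)

/-- Replace each node of a list by its list of children (used to pass from one
level of a subtree to the next, keeping the sibling orders). -/
def expand (T : PreTree V) (L : List V) : List V :=
  L.flatMap fun v => T.children (some v)

/-- The breadth-first listing of the nodes of `T`: for each child `c` of the root `r`
in sibling order, all nodes of the subtree rooted at `c` are listed, in level
(breadth-first) order determined by the sibling orders, before the subtree of any
later child of `r`. -/
def bfoList (T : PreTree V) : List V :=
  (T.children none).flatMap fun c =>
    (List.range (Fintype.card V + 1)).flatMap fun k => (expand T)^[k] [c]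

/-- The breadth-first order of a node of `V` on `T` (the root `r` gets `0`,
the nodes of `V` get `1, …, n` in the order of `bfoList`). -/
def bfo (T : PreTree V) (v : V) : ℕ := (bfoList T).idxOf v + 1

/-- Breadth-first order extended to `V ∪ {r}`, with `bfo r = 0`. -/
def bfoOpt (T : PreTree V) : Option V → ℕ
  | none => 0
  | some v => bfo T v

/-- `(u, v)` is a V-BFS edge with respect to `T`:
`bfo u < bfo v`, `P v ≠ r`, and `bfo u < bfo (P v)`. -/
def IsVBFS (T : PreTree V) (e : V × V) : Prop :=
  bfo T e.1 < bfo T e.2 ∧ T.parent e.2 ≠ none ∧ bfo T e.1 < bfoOpt T (T.parent e.2)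

instance (T : PreTree V) (e : V × V) : Decidable (IsVBFS T e) := by
  unfold IsVBFS; infer_instance

/-- `T` is a BFS-tree of the graph with edge set `E` : it is an ordered spanning
tree of that graph and no edge of `E` is a V-BFS edge with respect to `T`. -/
def IsBFSTree (E : Finset (V × V)) (T : PreTree V) : Prop :=
  IsOST E T ∧ ∀ e ∈ E, ¬ IsVBFS T e

/-- `LLSP E` : the number of edges of a longest simple directed path of the graph
with edge set `E`. -/
noncomputable def LLSP (E : Finset (V × V)) : ℕ :=
  sSup {k : ℕ | ∃ p : List V, p.Nodup ∧ p.Chain' (fun a b => (a, b) ∈ E) ∧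
    p.length = k + 1}

/-- `EL` is an enumeration `e₁, …, e_m` of the edge set `E`. -/
def IsEnum (E : Finset (V × V)) (EL : List (V × V)) : Prop :=
  EL.Nodup ∧ ∀ e : V × V, e ∈ EL ↔ e ∈ E

/-- The initial ordered spanning tree of EE-BFS / EB-BFS: every node of `V` is a
child of `r`, in a fixed sibling order. -/
def IsInitTree (T : PreTree V) : Prop :=
  (∀ v : V, T.parent v = none) ∧ (T.children none).Nodup ∧
  (∀ v : V, v ∈ T.children none) ∧ (∀ v : V, T.children (some v) = [])

/-- Restructuring step of EE-BFS: make `v` the rightmost child of `u` (the parent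
of `v` becomes `u` and `v` is placed last in the sibling order of the children of
`u`), all other parents and sibling orders being unchanged. -/
def restructure (T : PreTree V) (u v : V) : PreTree V where
  parent w := if w = v then some u else T.parent w
  children w :=
    if w = some u then (T.children (some u)).erase v ++ [v]
    else (T.children w).erase v

/-- Scanning a list of edges, EE-BFS style: each scanned edge that is a V-BFS edge
with respect to the current tree triggers a restructuring. -/
def EEscan (EL : List (V × V)) (T : PreTree V) : PreTree V :=
  EL.foldl (fun Tc e => if IsVBFS Tc e then restructure Tc e.1 e.2 else Tc) T

/-- One pass of EE-BFS over the fixed enumeration `EL` of `E`. -/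
def EEstep (EL : List (V × V)) (T : PreTree V) : PreTree V := EEscan EL T

/- ------------------  IM-BFS  ------------------ -/

/-- State of the deterministic BFS of IM-BFS: the FIFO queue, the set of nodes
already enqueued (adopted), and the adoption records `(new parent, child)` in
adoption order. -/
structure BFSState (V : Type) where
  queue : List V
  marked : Finset V
  adopts : List (Option V × V)

/-- Enqueue, with prospective parent `p`, the candidates in order; a node already
enqueued before is ignored (it was adopted the first time it was enqueued). -/
def enq (p : Option V) (cands : List V) (s : BFSState V) : BFSState V :=
  cands.foldl
    (fun s c =>
      if c ∈ s.marked then s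
      else ⟨s.queue ++ [c], insert c s.marked, s.adopts ++ [(p, c)]⟩) s

/-- The main loop of IM-BFS (fuel-based).  When the queue is nonempty, the first
node `u` is dequeued and visited: the children of `u` in `T` (in sibling order)
and then the targets of the edges of `EL` with source `u` (in list order) are
enqueued.  When the queue is empty, the earliest (in sibling order) not yet
enqueued child of `r` in `T` is enqueued with parent `r`; if all nodes have been
enqueued the adoption records are returned. -/
noncomputable def imBFSAux (T : PreTree V) (EL : List (V × V)) :
    ℕ → BFSState V → List (Option V × V)
  | 0, s => s.adopts
  | fuel + 1, s =>
    match s.queue with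
    | u :: rest =>
        let cands := T.children (some u) ++
          (EL.filter fun e => decide (e.1 = u)).map Prod.snd
        imBFSAux T EL fuel (enq (some u) cands ⟨rest, s.marked, s.adopts⟩)
    | [] =>
        match (T.children none).find? (fun c => decide (c ∉ s.marked)) with
        | some c => imBFSAux T EL fuel (enq none [c] s)
        | none =>
            match (Finset.univ : Finset V).toList.find?
                (fun v => decide (v ∉ s.marked)) with
            | some v => imBFSAux T EL fuel (enq none [v] s)
            | none => s.adopts

/-- `imBFS T EL` : the ordered spanning tree produced by the deterministic
breadth-first search, started at `r`, of the graph whose edges are the tree edges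
of `T` together with the edges occurring in the list `EL` (Stipulation 1):
each node's new parent is the node during whose processing it was first enqueued,
and the children of each node are ordered by adoption time. -/
noncomputable def imBFS (T : PreTree V) (EL : List (V × V)) : PreTree V :=
  let ad := imBFSAux T EL (2 * Fintype.card V + 1) ⟨[], ∅, []⟩
  { parent := fun v =>
      match ad.find? (fun pc => decide (pc.2 = v)) with
      | some pc => pc.1
      | none => none
    children := fun w => (ad.filter fun pc => decide (pc.1 = w)).map Prod.snd }

/-- The set of tree edges `(P v, v)` of `T` with `P v ≠ r`. -/
def treeEdges (T : PreTree V) : Finset (V × V) :=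
  Finset.univ.filter fun e : V × V => T.parent e.2 = some e.1

/- ------------------  EB-BFS  ------------------ -/

/-- One pass of EB-BFS (also the map `RE(𝔼₁, …, 𝔼_k)`): replace the current tree
`T` by `IM-BFS(T, 𝔼)` successively for each batch `𝔼`. -/
noncomputable def EBstep (batches : List (List (V × V))) (T : PreTree V) : PreTree V :=
  batches.foldl imBFS T

/-- The pass of EB-BFS over `batches` starting from `T` is one during which every
batch replacement leaves the edge set of the tree unchanged. -/
def CleanPass (batches : List (List (V × V))) (T : PreTree V) : Prop :=
  ∀ j < batches.length,
    (imBFS ((batches.take j).foldl imBFS T) (batches.getD j [])).parent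
      = ((batches.take j).foldl imBFS T).parent

/- ------------------  the sublist S(T, 𝔼)  ------------------ -/

/-- `S T EL` : if `EL` contains no V-BFS edge w.r.t. `T`, the empty list; otherwise,
letting `e₁ = (u₁, v₁)` be the earliest V-BFS edge of `EL` whose tail has minimal
breadth-first order among tails of V-BFS edges of `EL`, the sublist of `EL` (in the
same order) of the edges `(u, v)` at the position of `e₁` or later with
`u ≠ P(v)`, `bfo u ≥ bfo u₁` and `bfo v ≥ bfo u₁`. -/
def S (T : PreTree V) (EL : List (V × V)) : List (V × V) :=
  let vb := EL.filter fun e => decide (IsVBFS T e)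
  match (vb.map fun e => bfo T e.1).min? with
  | none => []
  | some b =>
      (EL.dropWhile fun e => !(decide (IsVBFS T e) && decide (bfo T e.1 = b))).filter
        fun e => decide (T.parent e.2 ≠ some e.1) && decide (b ≤ bfo T e.1)
          && decide (b ≤ bfo T e.2)

/-- The map sending `T` to `T_{k+1}` where `T₁ = T`, `S_j = S(T_j, E_j)` and
`T_{j+1} = IM-BFS(T_j, S_j)` (i.e. `RE(S₁, …, S_k)` with the `S`-lists recomputed
from the successively current trees). -/
noncomputable def reSstep (batches : List (List (V × V))) (T : PreTree V) : PreTree V :=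
  batches.foldl (fun Tc EL => imBFS Tc (S Tc EL)) T

/-- The list `[S₁, …, S_k]` of the sublists computed along the run
`T₁ = T`, `S_j = S(T_j, E_j)`, `T_{j+1} = IM-BFS(T_j, S_j)`. -/
noncomputable def runS (batches : List (List (V × V))) (T : PreTree V) : List (List (V × V)) :=
  (List.range batches.length).map fun j =>
    S (reSstep (batches.take j) T) (batches.getD j [])

/- ------------------  depth and depth'  ------------------ -/

/-- The depth of `v` in `T`: the number of tree edges on the path from `r` to `v`. -/
noncomputable def depth (T : PreTree V) (v : V) : ℕ :=
  sInf {k : ℕ | (parentStep T)^[k] (some v) = none}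

/-- The topmost proper ancestor of `v` (the child of `r` whose subtree contains `v`). -/
noncomputable def topAnc (T : PreTree V) (v : V) : Option V :=
  (parentStep T)^[depth T v - 1] (some v)

/-- `d(T_c)` : the maximum depth in `T` of a node of the subtree of `T` rooted at
the child `c` of `r`. -/
noncomputable def subtreeMaxDepth (T : PreTree V) (c : V) : ℕ :=
  Finset.univ.sup fun u : V => if topAnc T u = some c then depth T u else 0

/-- `depth′(v, T) = Σ_{1 ≤ l ≤ j−1} d(T_l) + depth(v, T)` where `v` belongs to the
subtree `T_j` of the `j`-th child of `r` in sibling order. -/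
noncomputable def depth' (T : PreTree V) (v : V) : ℕ :=
  match topAnc T v with
  | none => depth T v
  | some c =>
      (((T.children none).takeWhile fun x => decide (x ≠ c)).map
        (subtreeMaxDepth T)).sum + depth T v

/- ------------------  node removal (statements 13, 14)  ------------------ -/

/-- The edge set of the induced subgraph `G − u`, on the subtype `{v // v ≠ u}`. -/
def Esub (E : Finset (V × V)) (u : V) :
    Finset ({v : V // v ≠ u} × {v : V // v ≠ u}) :=
  Finset.univ.filter fun e => ((e.1 : V), (e.2 : V)) ∈ E

/-- Extend an ordered spanning tree `T'` of `G − u` to one of `G` by adding `u`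
as the rightmost child of `r`. -/
def extendRight (u : V) (T' : PreTree {v : V // v ≠ u}) : PreTree V where
  parent v := if h : v = u then none else (T'.parent ⟨v, h⟩).map Subtype.val
  children w :=
    match w with
    | none => (T'.children none).map Subtype.val ++ [u]
    | some x =>
        if hx : x = u then []
        else (T'.children (some ⟨x, hx⟩)).map Subtype.val

/-- Extend an ordered spanning tree `T'` of `G − u` to one of `G` by adding `u`
as the leftmost child of `r`. -/
def extendLeft (u : V) (T' : PreTree {v : V // v ≠ u}) : PreTree V where
  parent v := if h : v = u then none else (T'.parent ⟨v, h⟩).map Subtype.val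
  children w :=
    match w with
    | none => u :: (T'.children none).map Subtype.val
    | some x =>
        if hx : x = u then []
        else (T'.children (some ⟨x, hx⟩)).map Subtype.val

end BFSFormal

/-! Since `u` has no outgoing edges, every edge of `G` involving `u` ends at `u`, a child of `r`,
and so is never a V-BFS edge. Placing `u` first among the children of `r` makes the breadth-first
listing of the extended tree `u` followed by that of `T'`, so every other node's breadth-first
number goes up by exactly one and the V-BFS edges among them are those of `T'`. -/

namespace BFSFormal

lemma idxOf_map_of_injective {α β : Type*} [DecidableEq α] [DecidableEq β] {f : α → β}
    (hf : Function.Injective f) (l : List α) (a : α) :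
    (l.map f).idxOf (f a) = l.idxOf a := by
  induction l with
  | nil => rfl
  | cons b l ih => by_cases h : b = a <;> simp [h, hf.ne, ih]

section Levels

variable {V : Type} (T : PreTree V)

lemma iterate_parentStep_none (k : ℕ) : (parentStep T)^[k] none = none :=
  Function.iterate_fixed rfl k

lemma iterate_expand_nil (k : ℕ) : (expand T)^[k] [] = [] :=
  Function.iterate_fixed rfl k

/-- If the first `card V + 1` points of an orbit of `parentStep` lie in `V`, two of them
coincide, so the orbit is eventually periodic and never reaches `r`. -/
lemma lt_card_of_iterate_parentStep_ne_none [Fintype V]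
    (hterm : ∀ v : V, ∃ k, (parentStep T)^[k] (some v) = none) {v : V} {k : ℕ}
    (hk : (parentStep T)^[k] (some v) ≠ none) : k < Fintype.card V := by
  have hstay : ∀ i ≤ k, (parentStep T)^[i] (some v) ≠ none := fun i hi h => hk <| by
    rw [← Nat.sub_add_cancel hi, Function.iterate_add_apply, h, iterate_parentStep_none]
  have hsome : ∀ i ≤ k,
      (parentStep T)^[i] (some v) = some (((parentStep T)^[i] (some v)).getD v) := fun i hi =>
    (Option.getD_of_ne_none (hstay i hi) v).symm
  by_contra! hle
  obtain ⟨i, j, hij, heq⟩ := Fintype.exists_ne_map_eq_of_card_lt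
    (fun i : Fin (k + 1) => ((parentStep T)^[i] (some v)).getD v) (by simp; omega)
  wlog hlt : i < j generalizing i j
  · exact this j i hij.symm heq.symm (lt_of_le_of_ne (not_lt.mp hlt) hij.symm)
  have hper : Function.IsPeriodicPt (parentStep T) (j - i) ((parentStep T)^[i] (some v)) := by
    rw [Function.IsPeriodicPt, Function.IsFixedPt, ← Function.iterate_add_apply,
      Nat.sub_add_cancel hlt.le, hsome i (by omega), hsome j (by omega)]
    exact congrArg some heq.symm
  obtain ⟨m, hm⟩ := hterm v
  refine hstay (m % (j - i) + i) (by have := Nat.mod_lt m (Nat.sub_pos_of_lt hlt); omega) ?_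
  rw [Function.iterate_add_apply, hper.iterate_mod_apply, ← Function.iterate_add_apply,
    Nat.add_comm, Function.iterate_add_apply, hm, iterate_parentStep_none]

lemma exists_mem_of_mem_iterate_expand
    (hchild : ∀ w v : V, v ∈ T.children (some w) → T.parent v = some w)
    {L : List V} {k : ℕ} {v : V} (hv : v ∈ (expand T)^[k] L) :
    ∃ w ∈ L, (parentStep T)^[k] (some v) = some w := by
  induction k generalizing v with
  | zero => exact ⟨v, hv, rfl⟩
  | succ k ih =>
    rw [Function.iterate_succ_apply'] at hv
    obtain ⟨w, hw, hvw⟩ := List.mem_flatMap.mp hv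
    obtain ⟨c, hc, hwc⟩ := ih hw
    exact ⟨c, hc, by rw [Function.iterate_succ_apply, parentStep, hchild w v hvw, hwc]⟩

lemma iterate_expand_singleton_eq_nil [Fintype V]
    (hterm : ∀ v : V, ∃ k, (parentStep T)^[k] (some v) = none)
    (hchild : ∀ w v : V, v ∈ T.children (some w) → T.parent v = some w)
    {k : ℕ} (hk : Fintype.card V ≤ k) (c : V) :
    (expand T)^[k] [c] = [] := by
  refine List.eq_nil_iff_forall_not_mem.mpr fun v hv => ?_
  obtain ⟨w, -, hvw⟩ := exists_mem_of_mem_iterate_expand T hchild hv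
  exact (lt_card_of_iterate_parentStep_ne_none T hterm (v := v) (by simp [hvw])).not_ge hk

/-- Levels of depth at least `card V` are empty, so the level cut-off in `bfoList` may be moved to
any `n ≥ card V`; this reconciles the cut-offs used for `G` and for `G − u`. -/
lemma flatMap_range_iterate_expand [Fintype V]
    (hterm : ∀ v : V, ∃ k, (parentStep T)^[k] (some v) = none)
    (hchild : ∀ w v : V, v ∈ T.children (some w) → T.parent v = some w)
    {n : ℕ} (hn : Fintype.card V ≤ n) (c : V) :
    (List.range n).flatMap (fun k => (expand T)^[k] [c])
      = (List.range (Fintype.card V)).flatMap (fun k => (expand T)^[k] [c]) := by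
  obtain ⟨m, rfl⟩ := Nat.exists_eq_add_of_le hn
  rw [List.range_add, List.flatMap_append, List.flatMap_map]
  simp [iterate_expand_singleton_eq_nil T hterm hchild (Nat.le_add_right _ _)]

end Levels

section ExtendLeft

variable {V : Type} [DecidableEq V] {u : V} {T' : PreTree {v : V // v ≠ u}}

@[simp]
lemma extendLeft_parent_self : (extendLeft u T').parent u = none := dif_pos rfl

@[simp]
lemma extendLeft_parent_val (x : {v : V // v ≠ u}) :
    (extendLeft u T').parent x = (T'.parent x).map Subtype.val := dif_neg x.2

@[simp]
lemma extendLeft_children_none :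
    (extendLeft u T').children none = u :: (T'.children none).map Subtype.val := rfl

@[simp]
lemma extendLeft_children_self : (extendLeft u T').children (some u) = [] := dif_pos rfl

@[simp]
lemma extendLeft_children_val (x : {v : V // v ≠ u}) :
    (extendLeft u T').children (some x) = (T'.children (some x)).map Subtype.val := dif_neg x.2

lemma semiconj_parentStep_extendLeft :
    Function.Semiconj (Option.map Subtype.val) (parentStep T') (parentStep (extendLeft u T')) := by
  rintro (_ | x)
  · rfl
  · exact (extendLeft_parent_val x).symm

lemma semiconj_expand_extendLeft :
    Function.Semiconj (List.map Subtype.val) (expand T') (expand (extendLeft u T')) := by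
  intro L
  simp only [expand, List.map_flatMap, List.flatMap_map, extendLeft_children_val]

lemma bfoList_extendLeft [Fintype V]
    (hterm : ∀ v, ∃ k, (parentStep T')^[k] (some v) = none)
    (hchild : ∀ w v, v ∈ T'.children (some w) → T'.parent v = some w) :
    bfoList (extendLeft u T') = u :: (bfoList T').map Subtype.val := by
  have hu_levels : ∀ k, (expand (extendLeft u T'))^[k + 1] [u] = [] := fun k => by
    rw [Function.iterate_succ_apply]
    simpa [expand] using iterate_expand_nil (extendLeft u T') k
  have hcard : Fintype.card {v : V // v ≠ u} ≤ Fintype.card V := Fintype.card_subtype_le _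
  have hc_levels : ∀ (c : {v : V // v ≠ u}) (k : ℕ),
      (expand (extendLeft u T'))^[k] [c.val] = ((expand T')^[k] [c]).map Subtype.val :=
    fun c k => ((semiconj_expand_extendLeft.iterate_right k) [c]).symm
  have hu_list : (List.range (Fintype.card V + 1)).flatMap
      (fun k => (expand (extendLeft u T'))^[k] [u]) = [u] := by
    simp [List.range_succ_eq_map, hu_levels]
  have hc_list : ∀ c : {v : V // v ≠ u},
      (List.range (Fintype.card V + 1)).flatMap (fun k => (expand (extendLeft u T'))^[k] [c.val])
        = ((List.range (Fintype.card {v : V // v ≠ u} + 1)).flatMap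
            fun k => (expand T')^[k] [c]).map Subtype.val := fun c => by
    rw [flatMap_range_iterate_expand T' hterm hchild (Nat.le_succ _) c,
      ← flatMap_range_iterate_expand T' hterm hchild (n := Fintype.card V + 1) (by omega) c,
      List.map_flatMap]
    simp only [hc_levels]
  rw [bfoList, bfoList, extendLeft_children_none, List.flatMap_cons, hu_list, List.flatMap_map,
    List.map_flatMap]
  simp only [hc_list]
  rfl

lemma bfo_extendLeft_val [Fintype V]
    (hterm : ∀ v, ∃ k, (parentStep T')^[k] (some v) = none)
    (hchild : ∀ w v, v ∈ T'.children (some w) → T'.parent v = some w)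
    (x : {v : V // v ≠ u}) :
    bfo (extendLeft u T') x = bfo T' x + 1 := by
  rw [bfo, bfo, bfoList_extendLeft hterm hchild, List.idxOf_cons_ne _ (Ne.symm x.2),
    idxOf_map_of_injective Subtype.val_injective]

lemma exists_iterate_parentStep_extendLeft_eq_none
    (hterm : ∀ v, ∃ k, (parentStep T')^[k] (some v) = none) (v : V) :
    ∃ k, (parentStep (extendLeft u T'))^[k] (some v) = none := by
  by_cases hv : v = u
  · exact ⟨1, by simp [hv, parentStep]⟩
  lift v to {v : V // v ≠ u} using hv
  obtain ⟨k, hk⟩ := hterm v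
  have hmap := (semiconj_parentStep_extendLeft (T' := T')).iterate_right k (some v)
  rw [hk] at hmap
  exact ⟨k, hmap.symm⟩

lemma mem_of_extendLeft_parent_eq_some [Fintype V] {E : Finset (V × V)}
    (hedge : ∀ v w, T'.parent v = some w → (w, v) ∈ Esub E u) {v w : V}
    (hvw : (extendLeft u T').parent v = some w) : (w, v) ∈ E := by
  by_cases hv : v = u
  · simp [hv] at hvw
  lift v to {v : V // v ≠ u} using hv
  obtain ⟨w, hw, rfl⟩ := Option.map_eq_some_iff.mp ((extendLeft_parent_val v).symm.trans hvw)
  simpa [Esub] using hedge v w hw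

lemma nodup_extendLeft_children (hnodup : ∀ w, (T'.children w).Nodup) (w : Option V) :
    ((extendLeft u T').children w).Nodup := by
  rcases w with _ | w
  · rw [extendLeft_children_none]
    exact List.nodup_cons.mpr ⟨by simp, (hnodup none).map Subtype.val_injective⟩
  by_cases hw : w = u
  · simp [hw]
  lift w to {v : V // v ≠ u} using hw
  simpa using (hnodup (some w)).map Subtype.val_injective

lemma mem_extendLeft_children_iff (hchild : ∀ w v, v ∈ T'.children w ↔ T'.parent v = w)
    (w : Option V) (v : V) :
    v ∈ (extendLeft u T').children w ↔ (extendLeft u T').parent v = w := by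
  by_cases hv : v = u
  · rw [hv]
    rcases w with _ | w
    · simp
    by_cases hw : w = u
    · simp [hw]
    lift w to {v : V // v ≠ u} using hw
    simp
  lift v to {v : V // v ≠ u} using hv
  rw [extendLeft_parent_val]
  rcases w with _ | w
  · rw [extendLeft_children_none, List.mem_cons, List.mem_map_of_injective Subtype.val_injective,
      Option.map_eq_none_iff, hchild]
    exact or_iff_right v.2
  by_cases hw : w = u
  · rw [hw, extendLeft_children_self]
    simp only [List.not_mem_nil, false_iff, Option.map_eq_some_iff, not_exists, not_and]
    exact fun a _ => a.2
  lift w to {v : V // v ≠ u} using hw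
  rw [extendLeft_children_val, List.mem_map_of_injective Subtype.val_injective, hchild]
  exact ((Option.map_injective Subtype.val_injective).eq_iff (a := T'.parent v) (b := some w)).symm

lemma isOST_extendLeft [Fintype V] {E : Finset (V × V)} (hT' : IsOST (Esub E u) T') :
    IsOST E (extendLeft u T') :=
  ⟨exists_iterate_parentStep_extendLeft_eq_none hT'.1,
    fun _ _ => mem_of_extendLeft_parent_eq_some hT'.2.1,
    nodup_extendLeft_children hT'.2.2.1, mem_extendLeft_children_iff hT'.2.2.2⟩

lemma not_isVBFS_extendLeft [Fintype V] {E : Finset (V × V)} (hu : ∀ e ∈ E, e.1 ≠ u)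
    (hT' : IsBFSTree (Esub E u) T') : ∀ e ∈ E, ¬ IsVBFS (extendLeft u T') e := by
  obtain ⟨⟨hterm, -, -, hchild⟩, hno⟩ := hT'
  have hbfo := bfo_extendLeft_val hterm fun w v => (hchild (some w) v).mp
  rintro ⟨a, b⟩ hab ⟨hlt, hpar, hpar_lt⟩
  have hb : b ≠ u := by rintro rfl; exact hpar extendLeft_parent_self
  lift a to {v : V // v ≠ u} using hu _ hab
  lift b to {v : V // v ≠ u} using hb
  obtain ⟨p, hp⟩ := Option.ne_none_iff_exists'.mp (by simpa using hpar)
  simp only [extendLeft_parent_val, hp, Option.map_some, bfoOpt, hbfo] at hlt hpar_lt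
  exact hno (a, b) (by simpa [Esub] using hab)
    ⟨by dsimp only; omega, by simp [hp], by simp only [hp, bfoOpt]; omega⟩

end ExtendLeft

theorem stmt14_general {V : Type} [Fintype V] [DecidableEq V]
    (E : Finset (V × V))
    (u : V) (hu : ∀ e ∈ E, e.1 ≠ u)
    (T' : PreTree {v : V // v ≠ u}) (hT' : IsBFSTree (Esub E u) T') :
    IsBFSTree E (extendLeft u T') :=
  ⟨isOST_extendLeft hT'.1, not_isVBFS_extendLeft hu hT'⟩

theorem stmt14 {V : Type} [Fintype V] [DecidableEq V]
    (hV : 1 ≤ Fintype.card V) (E : Finset (V × V))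
    (hE : ∀ e ∈ E, e.1 ≠ e.2)
    (u : V) (hu : ∀ e ∈ E, e.1 ≠ u)
    (T' : PreTree {v : V // v ≠ u}) (hT' : IsBFSTree (Esub E u) T') :
    IsBFSTree E (extendLeft u T') :=
  stmt14_general E u hu T' hT'

end BFSFormal
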